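/- arXiv:2104.00907 — 2 statements merged into one kernel-verified Lean document; each statement's English description precedes it below -/
import Mathlib

section
/- Let n ≥ 4 be an even integer and let α be a real number with 2/(n+1) ≤ α < 1. Then the set { α + (1−α)·√(1+z) : z ∈ 𝔻 } is contained in Ω_{nL} = φ_{nL}(𝔻). (Consequently SL*(α) = S*(α + (1−α)√(1+z)) is contained in S*_{nL}.) -/
open Complex Metric Set

/-- The function φ_{nL}(z) = 1 + n z/(n+1) + z^n/(n+1). -/
noncomputable def phinL (n : ℕ) (z : ℂ) : ℂ :=
  1 + (n : ℂ) * z / ((n : ℂ) + 1) + z ^ n / ((n : ℂ) + 1)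

/-- Ω_{nL} = φ_{nL}(𝔻), the image of the open unit disk. -/
def OmeganL (n : ℕ) : Set ℂ := phinL n '' ball (0 : ℂ) 1

/-- f is analytic on the unit disk with f(0) = 0 and f'(0) = 1. -/
def IsNormalizedAnalytic (f : ℂ → ℂ) : Prop :=
  AnalyticOnNhd ℂ f (ball (0 : ℂ) 1) ∧ f 0 = 0 ∧ deriv f 0 = 1

/-- p is subordinate to ψ on the unit disk. -/
def Subord (p ψ : ℂ → ℂ) : Prop :=
  ∃ ω : ℂ → ℂ, AnalyticOnNhd ℂ ω (ball (0 : ℂ) 1) ∧ ω 0 = 0 ∧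
    (∀ z ∈ ball (0 : ℂ) 1, ω z ∈ ball (0 : ℂ) 1) ∧
    (∀ z ∈ ball (0 : ℂ) 1, p z = ψ (ω z))

/-- Membership in the class S*_{nL}. -/
def MemSnL (n : ℕ) (f : ℂ → ℂ) : Prop :=
  IsNormalizedAnalytic f ∧ (∀ z ∈ ball (0 : ℂ) 1, z ≠ 0 → f z ≠ 0) ∧
  Subord (fun z => if z = 0 then 1 else z * deriv f z / f z) (phinL n)

/-! The disk `|w - 1| < (n-1)/(n+1)` lies in `Ω_{nL}`: `φ_{nL}` maps the unit circle outside it,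
so, `Ω_{nL}` being open by the open mapping theorem, the connected disk cannot leave `Ω_{nL}`
without crossing its frontier, which lies in the image of the circle. On the other hand the
principal square root satisfies `|√(1+z) - 1| ≤ |z|`, because `√(1+z) - 1 = z / (√(1+z) + 1)`
and `Re √(1+z) ≥ 0`; hence `α + (1-α)√(1+z)` lies within `1 - α ≤ (n-1)/(n+1)` of `1`. -/

theorem IsPreconnected.subset_image_ball_of_disjoint_image_sphere {X Y : Type*}
    [PseudoMetricSpace X] [ProperSpace X] [TopologicalSpace Y] [T2Space Y] {f : X → Y}
    {c : X} {r : ℝ} {S : Set Y} (hS : IsPreconnected S)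
    (hf : ContinuousOn f (closedBall c r)) (hopen : IsOpen (f '' ball c r))
    (hmeet : (S ∩ f '' ball c r).Nonempty) (hsphere : Disjoint S (f '' sphere c r)) :
    S ⊆ f '' ball c r := by
  refine hS.subset_of_closure_inter_subset hopen hmeet ?_
  rintro y ⟨hy_cl, hyS⟩
  have hclosed : IsClosed (f '' closedBall c r) :=
    ((isCompact_closedBall c r).image_of_continuousOn hf).isClosed
  obtain ⟨x, hx, rfl⟩ := closure_minimal (image_mono ball_subset_closedBall) hclosed hy_cl
  rw [← ball_union_sphere] at hx
  rcases hx with hx | hx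
  · exact mem_image_of_mem f hx
  · exact absurd (mem_image_of_mem f hx) (hsphere.notMem_of_mem_left hyS)

theorem differentiable_phinL (n : ℕ) : Differentiable ℂ (phinL n) := by
  unfold phinL
  fun_prop

theorem phinL_sub_one (n : ℕ) (z : ℂ) :
    phinL n z - 1 = ((n : ℂ) * z + z ^ n) / ((n : ℂ) + 1) := by
  unfold phinL
  ring

theorem phinL_zero {n : ℕ} (hn : n ≠ 0) : phinL n 0 = 1 := by
  simp [phinL, zero_pow hn]

theorem isOpen_OmeganL {n : ℕ} (hn : n ≠ 0) : IsOpen (OmeganL n) := by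
  have hconst : ¬ ∃ w, ∀ z ∈ ball (0 : ℂ) 1, phinL n z = w := by
    rintro ⟨w, hw⟩
    have hhalf : phinL n (1 / 2) - 1 = (((n / 2 + (1 / 2) ^ n) / (n + 1) : ℝ) : ℂ) := by
      rw [phinL_sub_one]
      push_cast
      ring
    have hpos : (0 : ℝ) < (n / 2 + (1 / 2) ^ n) / (n + 1) := by positivity
    rw [hw _ (by norm_num), ← hw 0 (mem_ball_self one_pos), phinL_zero hn, sub_self] at hhalf
    exact hpos.ne' (ofReal_eq_zero.mp hhalf.symm)
  rcases ((differentiable_phinL n).differentiableOn.analyticOnNhd isOpen_ball).is_constant_or_isOpen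
    (convex_ball _ _).isPreconnected with h | h
  · exact absurd h hconst
  · exact h _ subset_rfl isOpen_ball

theorem dist_phinL_one_of_norm_eq_one (n : ℕ) {w : ℂ} (hw : ‖w‖ = 1) :
    ((n : ℝ) - 1) / ((n : ℝ) + 1) ≤ dist (phinL n w) 1 := by
  have hden : ‖(n : ℂ) + 1‖ = (n : ℝ) + 1 := by exact_mod_cast norm_natCast (n + 1)
  have hlow : (n : ℝ) - 1 ≤ ‖(n : ℂ) * w + w ^ n‖ := by
    calc (n : ℝ) - 1 = ‖(n : ℂ) * w‖ - ‖w ^ n‖ := by simp [hw]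
      _ ≤ ‖(n : ℂ) * w + w ^ n‖ := norm_sub_le_norm_add _ _
  rw [dist_eq_norm, phinL_sub_one, norm_div, hden]
  gcongr

theorem ball_subset_OmeganL {n : ℕ} (hn : n ≠ 0) :
    ball (1 : ℂ) (((n : ℝ) - 1) / ((n : ℝ) + 1)) ⊆ OmeganL n := by
  rcases (ball (1 : ℂ) (((n : ℝ) - 1) / ((n : ℝ) + 1))).eq_empty_or_nonempty with hempty | hne
  · simp [hempty]
  refine (convex_ball _ _).isPreconnected.subset_image_ball_of_disjoint_image_sphere
    (differentiable_phinL n).continuous.continuousOn (isOpen_OmeganL hn) ?_ ?_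
  · exact ⟨1, mem_ball_self (nonempty_ball.mp hne), 0, mem_ball_self one_pos, phinL_zero hn⟩
  · rw [disjoint_right]
    rintro _ ⟨w, hw, rfl⟩ hmem
    rw [mem_sphere_zero_iff_norm] at hw
    exact (dist_phinL_one_of_norm_eq_one n hw).not_gt hmem

theorem norm_sub_one_le_norm_sq_sub_one {w : ℂ} (hw : 0 ≤ w.re) : ‖w - 1‖ ≤ ‖w ^ 2 - 1‖ := by
  have hplus : 1 ≤ ‖w + 1‖ := by
    calc (1 : ℝ) ≤ (w + 1).re := by simp [hw]
      _ ≤ ‖w + 1‖ := re_le_norm _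
  calc ‖w - 1‖ ≤ ‖w - 1‖ * ‖w + 1‖ := le_mul_of_one_le_right (norm_nonneg _) hplus
    _ = ‖w ^ 2 - 1‖ := by rw [← norm_mul]; congr 1; ring

theorem norm_cpow_half_sub_one_le (z : ℂ) : ‖(1 + z) ^ ((1 : ℂ) / 2) - 1‖ ≤ ‖z‖ := by
  have hre : 0 ≤ ((1 + z) ^ ((1 : ℂ) / 2)).re := by
    rw [one_div, cpow_inv_two_re]
    exact Real.sqrt_nonneg _
  have hsq : ((1 + z) ^ ((1 : ℂ) / 2)) ^ 2 = 1 + z := by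
    simp [one_div]
  simpa [hsq] using norm_sub_one_le_norm_sq_sub_one hre

theorem stmt5_general (n : ℕ) (α : ℝ)
    (hα1 : 2 / ((n : ℝ) + 1) ≤ α) (hα2 : α < 1) :
    (fun z : ℂ => (α : ℂ) + (1 - (α : ℂ)) * (1 + z) ^ ((1 : ℂ) / 2)) '' ball (0 : ℂ) 1
      ⊆ OmeganL n := by
  have hpos : (0 : ℝ) < (n : ℝ) + 1 := by positivity
  have hn : n ≠ 0 := by
    rintro rfl
    norm_num at hα1
    linarith
  have hα : 1 - α ≤ ((n : ℝ) - 1) / ((n : ℝ) + 1) := by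
    rw [div_le_iff₀ hpos] at hα1
    rw [le_div_iff₀ hpos]
    linarith
  rintro _ ⟨z, hz, rfl⟩
  rw [mem_ball_zero_iff] at hz
  apply ball_subset_OmeganL hn
  have hnorm : ‖(1 : ℂ) - α‖ = 1 - α := by
    rw [← ofReal_one, ← ofReal_sub, norm_real, Real.norm_of_nonneg (by linarith)]
  calc dist ((α : ℂ) + (1 - α) * (1 + z) ^ ((1 : ℂ) / 2)) 1
      = (1 - α) * ‖(1 + z) ^ ((1 : ℂ) / 2) - 1‖ := by
        rw [dist_eq_norm, ← hnorm, ← norm_mul]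
        congr 1
        ring
    _ ≤ (1 - α) * ‖z‖ := by
        gcongr
        exact norm_cpow_half_sub_one_le z
    _ < 1 - α := mul_lt_of_lt_one_right (by linarith) hz
    _ ≤ ((n : ℝ) - 1) / ((n : ℝ) + 1) := hα

theorem stmt5 (n : ℕ) (hn : 4 ≤ n) (hne : Even n) (α : ℝ)
    (hα1 : 2 / ((n : ℝ) + 1) ≤ α) (hα2 : α < 1) :
    (fun z : ℂ => (α : ℂ) + (1 - (α : ℂ)) * (1 + z) ^ ((1 : ℂ) / 2)) '' ball (0 : ℂ) 1
      ⊆ OmeganL n :=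
  stmt5_general n α hα1 hα2
end

section
/- Let n ≥ 4 be an even integer. Let f be a normalized analytic function on 𝔻 such that Re( f(z)/z ) > 0 for all z ∈ 𝔻 \ {0}. Then for every z with 0 < |z| < ( √(2(1+n²)) − (n+1) ) / (n−1), one has z f'(z)/f(z) ∈ Ω_{nL}. (This is the S*_{nL}-radius of the class W.) -/
open Complex Metric Set

/-!
Writing `f z = z p z`, the function `p` has positive real part and `p 0 = 1`, and
`z f'(z) / f(z) - 1 = z p'(z) / p(z)`. The Carathéodory–Schwarz–Pick estimate
`|p'(z)| (1 - |z|²) ≤ 2 Re p(z)` therefore puts `z f'(z) / f(z)` in the disk of centre `1` and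
radius `2r / (1 - r²)`, `r = |z|`. On the other hand `Ω_{nL}` contains the disk of centre `1` and
radius `(n - 1) / (n + 1)`, because `n z + z^n = d` has a root in `𝔻` whenever `|d| < n - 1`
(a fixed point of the contraction `z ↦ (d - z^n) / n`). The two disks are nested exactly when
`(n - 1) r² + 2 (n + 1) r < n - 1`, and the radius in the theorem is the positive root.
-/

open ComplexConjugate Filter Topology

section UnitDisk

lemma norm_add_lt_norm_one_add_conj_mul {a z : ℂ} (ha : ‖a‖ < 1) (hz : ‖z‖ < 1) :
    ‖z + a‖ < ‖1 + conj a * z‖ := by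
  have hid : normSq (1 + conj a * z) - normSq (z + a) = (1 - normSq a) * (1 - normSq z) := by
    simp only [normSq_apply, add_re, add_im, one_re, one_im, mul_re, mul_im, conj_re, conj_im]
    ring
  have ha' : normSq a < 1 := by rw [← Complex.sq_norm]; nlinarith [norm_nonneg a]
  have hz' : normSq z < 1 := by rw [← Complex.sq_norm]; nlinarith [norm_nonneg z]
  rw [← sq_lt_sq₀ (norm_nonneg _) (norm_nonneg _), Complex.sq_norm, Complex.sq_norm]
  nlinarith

lemma one_add_conj_mul_ne_zero {a z : ℂ} (ha : ‖a‖ < 1) (hz : ‖z‖ < 1) : 1 + conj a * z ≠ 0 :=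
  norm_pos_iff.1 ((norm_nonneg _).trans_lt (norm_add_lt_norm_one_add_conj_mul ha hz))

lemma mapsTo_add_div_one_add_conj_mul {a : ℂ} (ha : ‖a‖ < 1) :
    MapsTo (fun z => (z + a) / (1 + conj a * z)) (ball 0 1) (ball 0 1) := by
  intro z hz
  rw [mem_ball_zero_iff] at hz ⊢
  rw [norm_div, div_lt_one (norm_pos_iff.2 (one_add_conj_mul_ne_zero ha hz))]
  exact norm_add_lt_norm_one_add_conj_mul ha hz

lemma norm_sub_div_add_conj_lt_one {w c : ℂ} (hw : 0 < w.re) (hc : 0 < c.re) :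
    ‖(w - c) / (w + conj c)‖ < 1 := by
  have hden : w + conj c ≠ 0 := fun h => by
    have := congrArg re h
    simp only [add_re, conj_re, zero_re] at this
    linarith
  have hid : normSq (w + conj c) - normSq (w - c) = 4 * w.re * c.re := by
    simp only [normSq_apply, add_re, add_im, sub_re, sub_im, conj_re, conj_im]
    ring
  rw [norm_div, div_lt_one (norm_pos_iff.2 hden), ← sq_lt_sq₀ (norm_nonneg _) (norm_nonneg _),
    Complex.sq_norm, Complex.sq_norm]
  nlinarith

end UnitDisk

section Caratheodory

variable {p : ℂ → ℂ}

lemma norm_deriv_zero_le_two_mul_re (hd : DifferentiableOn ℂ p (ball 0 1))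
    (hp : ∀ z ∈ ball (0 : ℂ) 1, 0 < (p z).re) : ‖deriv p 0‖ ≤ 2 * (p 0).re := by
  set c := p 0
  have hc : 0 < c.re := hp 0 (mem_ball_self one_pos)
  have hden : ∀ z ∈ ball (0 : ℂ) 1, p z + conj c ≠ 0 := fun z hz h => by
    have := congrArg re h
    simp only [add_re, conj_re, zero_re] at this
    linarith [hp z hz]
  set q := fun z => (p z - c) / (p z + conj c)
  have hq : DifferentiableOn ℂ q (ball 0 1) := (hd.sub_const c).div (hd.add_const _) hden
  -- the Cayley transform centred at `c` maps the right half-plane into the unit disk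
  have hmaps : MapsTo q (ball 0 1) (closedBall (q 0) 1) := fun z hz => by
    simpa [q, c] using (norm_sub_div_add_conj_lt_one (hp z hz) hc).le
  have hc2 : c + conj c = (2 * c.re : ℝ) := add_conj c
  have hderiv : HasDerivAt q (deriv p 0 / (2 * c.re : ℝ)) 0 := by
    have hp0 : HasDerivAt p (deriv p 0) 0 :=
      (hd.differentiableAt (ball_mem_nhds 0 one_pos)).hasDerivAt
    have hc0 : c + conj c ≠ 0 := hden 0 (mem_ball_self one_pos)
    refine ((hp0.sub_const c).div (hp0.add_const (conj c)) hc0).congr_deriv ?_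
    change (_ * (c + _) - (c - c) * _) / (c + _) ^ 2 = _
    rw [← hc2, sub_self, zero_mul, sub_zero]
    field_simp
  have hschwarz := norm_deriv_le_one_of_mapsTo_ball hq hmaps one_pos
  rwa [hderiv.deriv, norm_div, norm_real, Real.norm_of_nonneg (by positivity),
    div_le_one (by positivity)] at hschwarz

lemma norm_deriv_mul_one_sub_sq_le_two_mul_re (hd : DifferentiableOn ℂ p (ball 0 1))
    (hp : ∀ z ∈ ball (0 : ℂ) 1, 0 < (p z).re) {a : ℂ} (ha : a ∈ ball (0 : ℂ) 1) :
    ‖deriv p a‖ * (1 - ‖a‖ ^ 2) ≤ 2 * (p a).re := by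
  rw [mem_ball_zero_iff] at ha
  set σ : ℂ → ℂ := fun z => (z + a) / (1 + conj a * z)
  have hσmaps : MapsTo σ (ball 0 1) (ball 0 1) := mapsTo_add_div_one_add_conj_mul ha
  have hσd : DifferentiableOn ℂ σ (ball 0 1) := fun z hz =>
    ((differentiableAt_id.add_const a).div ((differentiableAt_id.const_mul _).const_add 1)
      (one_add_conj_mul_ne_zero ha (mem_ball_zero_iff.1 hz))).differentiableWithinAt
  have hσ : HasDerivAt σ (1 - conj a * a) 0 := by
    refine (((hasDerivAt_id 0).add_const a).div
      (((hasDerivAt_id 0).const_mul (conj a)).const_add 1) (by simp)).congr_deriv ?_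
    simp [mul_comm]
  have hpa : HasDerivAt p (deriv p a) (σ 0) := by
    simpa [σ] using (hd.differentiableAt (isOpen_ball.mem_nhds (mem_ball_zero_iff.2 ha))).hasDerivAt
  have hbound := norm_deriv_zero_le_two_mul_re (hd.comp hσd hσmaps) fun z hz => hp _ (hσmaps hz)
  have hnorm : ‖1 - conj a * a‖ = 1 - ‖a‖ ^ 2 := by
    rw [conj_mul', ← ofReal_pow, ← ofReal_one, ← ofReal_sub, norm_real,
      Real.norm_of_nonneg (by nlinarith [norm_nonneg a])]
  rwa [(hpa.comp 0 hσ).deriv, norm_mul, hnorm, Function.comp_apply, show σ 0 = a by simp [σ]]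
    at hbound

end Caratheodory

lemma norm_mul_deriv_div_sub_one_mul_le {f : ℂ → ℂ} (hf : IsNormalizedAnalytic f)
    (hre : ∀ z ∈ ball (0 : ℂ) 1, z ≠ 0 → 0 < (f z / z).re) {z : ℂ} (hz : z ∈ ball (0 : ℂ) 1)
    (hz0 : z ≠ 0) :
    ‖z * deriv f z / f z - 1‖ * (1 - ‖z‖ ^ 2) ≤ 2 * ‖z‖ := by
  obtain ⟨hfa, hf0, hf1⟩ := hf
  set p := dslope f 0
  have hpf : ∀ w, w ≠ 0 → p w = f w / w := fun w hw => by
    simp [p, dslope_of_ne _ hw, slope_def_field, hf0]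
  have hpre : ∀ w ∈ ball (0 : ℂ) 1, 0 < (p w).re := by
    intro w hw
    rcases eq_or_ne w 0 with rfl | hw0
    · simp [p, hf1]
    · rw [hpf w hw0]
      exact hre w hw hw0
  have hpd : DifferentiableOn ℂ p (ball 0 1) :=
    (differentiableOn_dslope (ball_mem_nhds 0 one_pos)).2 hfa.differentiableOn
  have hpz : p z ≠ 0 := fun h => by simpa [h] using hpre z hz
  have hfz : f z ≠ 0 := fun h => hpz (by rw [hpf z hz0, h, zero_div])
  have hlog : z * deriv f z / f z - 1 = z * deriv p z / p z := by
    have hev : p =ᶠ[𝓝 z] fun w => f w / w := (eventually_ne_nhds hz0).mono hpf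
    rw [hev.deriv_eq, hpf z hz0,
      deriv_fun_div (d := fun w => w) (hfa z hz).differentiableAt differentiableAt_id hz0]
    field_simp
    simp
  calc ‖z * deriv f z / f z - 1‖ * (1 - ‖z‖ ^ 2)
      = ‖z‖ * (‖deriv p z‖ * (1 - ‖z‖ ^ 2)) / ‖p z‖ := by
        rw [hlog, norm_div, norm_mul]
        ring
    _ ≤ ‖z‖ * (2 * (p z).re) / ‖p z‖ := by
        gcongr ‖z‖ * ?_ / _
        exact norm_deriv_mul_one_sub_sq_le_two_mul_re hpd hpre hz
    _ ≤ ‖z‖ * (2 * ‖p z‖) / ‖p z‖ := by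
        gcongr
        exact re_le_norm _
    _ = 2 * ‖z‖ := by
        field_simp [norm_ne_zero_iff.2 hpz]

lemma two_mul_mul_lt_of_lt_radius {n : ℕ} (hn : 2 ≤ n) {r : ℝ} (hr0 : 0 ≤ r)
    (hr : r < (Real.sqrt (2 * (1 + (n : ℝ) ^ 2)) - ((n : ℝ) + 1)) / ((n : ℝ) - 1)) :
    2 * r * ((n : ℝ) + 1) < ((n : ℝ) - 1) * (1 - r ^ 2) := by
  have hn1 : (0 : ℝ) < n - 1 := by
    have : (2 : ℝ) ≤ n := by exact_mod_cast hn
    linarith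
  have hs : r * (n - 1) + (n + 1) < Real.sqrt (2 * (1 + (n : ℝ) ^ 2)) := by
    rw [lt_div_iff₀ hn1] at hr
    linarith
  -- `2 (1 + n²) = (n + 1)² + (n - 1)²`
  have hsq := (Real.lt_sqrt (by positivity)).1 hs
  nlinarith

lemma exists_mem_ball_natCast_mul_add_pow_eq {n : ℕ} (hn : 2 ≤ n) {d : ℂ} (hd : ‖d‖ < n - 1) :
    ∃ z ∈ ball (0 : ℂ) 1, n * z + z ^ n = d := by
  have hn' : (2 : ℝ) ≤ n := by exact_mod_cast hn
  set ρ : ℝ := (1 + ‖d‖ / (n - 1)) / 2 with hρ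
  have hn1 : (0 : ℝ) < n - 1 := by linarith
  have hdn : ‖d‖ / (n - 1) < 1 := (div_lt_one hn1).2 hd
  have hρ0 : 0 ≤ ρ := by positivity
  have hρ1 : ρ < 1 := by rw [hρ]; linarith
  have hdρ : ‖d‖ ≤ (n - 1) * ρ := by
    have := mul_div_cancel₀ ‖d‖ hn1.ne'
    rw [hρ]
    nlinarith
  have hpow : ∀ {k : ℕ}, k ≠ 0 → ∀ z ∈ closedBall (0 : ℂ) ρ, ‖z ^ k‖ ≤ ρ := fun hk z hz => by
    rw [norm_pow]
    exact (pow_le_pow_left₀ (norm_nonneg z) (mem_closedBall_zero_iff.1 hz) _).trans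
      (pow_le_of_le_one hρ0 hρ1.le hk)
  set T : ℂ → ℂ := fun z => (d - z ^ n) / n
  have hmaps : MapsTo T (closedBall 0 ρ) (closedBall 0 ρ) := fun z hz => by
    rw [mem_closedBall_zero_iff, norm_div, Complex.norm_natCast, div_le_iff₀ (by linarith)]
    linarith [norm_sub_le d (z ^ n), hpow (k := n) (by omega) z hz]
  have hT : ∀ z, HasDerivAt T (-z ^ (n - 1)) z := fun z => by
    refine (((hasDerivAt_pow n z).const_sub d).div_const (n : ℂ)).congr_deriv ?_
    field_simp [Nat.cast_ne_zero.2 (show n ≠ 0 by omega)]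
  have hlip : LipschitzOnWith ⟨ρ, hρ0⟩ T (closedBall 0 ρ) :=
    LipschitzOnWith.of_dist_le_mul fun x hx y hy => by
      rw [dist_eq_norm, dist_eq_norm]
      exact (convex_closedBall 0 ρ).norm_image_sub_le_of_norm_deriv_le
        (fun z _ => (hT z).differentiableAt)
        (fun z hz => by rw [(hT z).deriv, norm_neg]; exact hpow (by omega) z hz) hy hx
  obtain ⟨z, hz, hfix, -⟩ := ContractingWith.exists_fixedPoint' isClosed_closedBall.isComplete
    hmaps ⟨hρ1, hlip.mapsToRestrict hmaps⟩ (mem_closedBall_self hρ0) (edist_ne_top _ _)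
  refine ⟨z, closedBall_subset_ball hρ1 hz, ?_⟩
  have hfix : (d - z ^ n) / n = z := hfix
  field_simp [Nat.cast_ne_zero.2 (show n ≠ 0 by omega)] at hfix
  linear_combination -hfix

lemma ball_one_subset_omeganL {n : ℕ} (hn : 2 ≤ n) :
    ball (1 : ℂ) ((n - 1) / (n + 1)) ⊆ OmeganL n := by
  intro w hw
  have hn1 : (0 : ℝ) < n + 1 := by positivity
  have hd : ‖((n : ℂ) + 1) * (w - 1)‖ < n - 1 := by
    rw [mem_ball, dist_eq_norm, lt_div_iff₀ hn1] at hw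
    rwa [norm_mul, ← ofReal_natCast, ← ofReal_one, ← ofReal_add, norm_real,
      Real.norm_of_nonneg hn1.le, mul_comm]
  obtain ⟨z, hz, hzw⟩ := exists_mem_ball_natCast_mul_add_pow_eq hn hd
  refine ⟨z, hz, ?_⟩
  have : (n : ℂ) + 1 ≠ 0 := by exact_mod_cast hn1.ne'
  rw [phinL]
  field_simp
  linear_combination hzw

theorem stmt13_general (n : ℕ) (hn : 4 ≤ n)
    (f : ℂ → ℂ) (hf : IsNormalizedAnalytic f)
    (hre : ∀ z ∈ ball (0 : ℂ) 1, z ≠ 0 → 0 < (f z / z).re) :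
    ∀ z : ℂ, 0 < ‖z‖ →
      ‖z‖ < (Real.sqrt (2 * (1 + (n : ℝ) ^ 2)) - ((n : ℝ) + 1)) / ((n : ℝ) - 1) →
      z * deriv f z / f z ∈ OmeganL n := by
  intro z hz0 hzR
  have hn' : (4 : ℝ) ≤ n := by exact_mod_cast hn
  have hquad := two_mul_mul_lt_of_lt_radius (by omega) (norm_nonneg z) hzR
  have hz1 : ‖z‖ < 1 := by nlinarith
  have hlog := norm_mul_deriv_div_sub_one_mul_le hf hre (mem_ball_zero_iff.2 hz1)
    (norm_pos_iff.1 hz0)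
  apply ball_one_subset_omeganL (n := n) (by omega)
  rw [mem_ball, dist_eq_norm, lt_div_iff₀ (by positivity)]
  have hr2 : 0 < 1 - ‖z‖ ^ 2 := by nlinarith
  refine lt_of_mul_lt_mul_right ?_ hr2.le
  nlinarith

theorem stmt13 (n : ℕ) (hn : 4 ≤ n) (hne : Even n)
    (f : ℂ → ℂ) (hf : IsNormalizedAnalytic f)
    (hre : ∀ z ∈ ball (0 : ℂ) 1, z ≠ 0 → 0 < (f z / z).re) :
    ∀ z : ℂ, 0 < ‖z‖ →
      ‖z‖ < (Real.sqrt (2 * (1 + (n : ℝ) ^ 2)) - ((n : ℝ) + 1)) / ((n : ℝ) - 1) →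
      z * deriv f z / f z ∈ OmeganL n :=
  stmt13_general n hn f hf hre
end
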